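/- With γ = −2/(ν+m+n) and the t³VAE joint model p_{θ,ν}(x,z) = C_{ν,m+n}σ^{−n}[1 + ν^{−1}(‖z‖² + σ^{−2}‖x−μ_θ(z)‖²)]^{−(ν+m+n)/2}, one has ∬ p_{θ,ν}(x,z)^{1+γ} dx dz = σ^{−γn}·C_{ν,m+n}^γ·(1 + (m+n)/(ν−2)), for ν > 2. -/

import Mathlib

/-
Since `γ · (-(ν+m+n)/2) = 1`, the power `p^γ` is affine in the quadratic form
`Q = ‖z‖² + σ⁻²‖x - μ z‖²`, so
`p^{1+γ} = p · p^γ = σ^{-γn} C^γ · C σ^{-n} (1 + Q/ν)^{-(ν+m+n-2)/2}`.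
Translating `x` by `μ z` removes `μ` from the inner integral, and both integrals are then
Student-type integrals `∫ (t + ‖x‖²/b)^{-s} dx`, evaluated in polar coordinates by a Beta
integral. What remains is `C (νπ)^{(m+n)/2} Γ((ν-2)/2) / Γ((ν+m+n-2)/2)`, which the functional
equation of `Γ` turns into `1 + (m+n)/(ν-2)`: this is `1 + E‖w‖²/ν` for `w` a standard
multivariate t variable in dimension `m + n`.
-/

open MeasureTheory

noncomputable def tC (ν : ℝ) (d : ℕ) : ℝ :=
  Real.Gamma ((ν + d) / 2) / (Real.Gamma (ν / 2) * (ν * Real.pi) ^ ((d : ℝ) / 2))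

noncomputable def pjoint (m n : ℕ) (ν σ : ℝ) (μ : (Fin m → ℝ) → Fin n → ℝ)
    (x : Fin n → ℝ) (z : Fin m → ℝ) : ℝ :=
  tC ν (m + n) * (σ ^ n)⁻¹ *
    (1 + (1 / ν) * ((∑ i, z i ^ 2) + (∑ j, (x j - μ z j) ^ 2) / σ ^ 2))
      ^ (-(ν + m + n) / 2)

open Real Set Module

theorem integral_rpow_mul_one_sub_rpow {a b : ℝ} (ha : 0 < a) (hb : 0 < b) :
    ∫ x in (0:ℝ)..1, x ^ (a - 1) * (1 - x) ^ (b - 1) = Gamma a * Gamma b / Gamma (a + b) := by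
  have hbeta := Complex.Gamma_mul_Gamma_eq_betaIntegral (s := a) (t := b)
    (by simpa using ha) (by simpa using hb)
  have hofReal : ∀ x ∈ uIcc (0:ℝ) 1,
      (x : ℂ) ^ ((a : ℂ) - 1) * (1 - (x : ℂ)) ^ ((b : ℂ) - 1)
        = ((x ^ (a - 1) * (1 - x) ^ (b - 1) : ℝ) : ℂ) := by
    intro x hx
    rw [uIcc_of_le zero_le_one] at hx
    rw [Complex.ofReal_mul, Complex.ofReal_cpow hx.1, Complex.ofReal_cpow (by linarith [hx.2])]
    push_cast; ring
  rw [Complex.betaIntegral, intervalIntegral.integral_congr hofReal,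
    intervalIntegral.integral_ofReal, ← Complex.ofReal_add, Complex.Gamma_ofReal,
    Complex.Gamma_ofReal, Complex.Gamma_ofReal, ← Complex.ofReal_mul,
    ← Complex.ofReal_mul] at hbeta
  rw [eq_div_iff (Gamma_pos_of_pos (add_pos ha hb)).ne', mul_comm]
  exact_mod_cast hbeta.symm

theorem integral_Ioi_rpow_mul_one_add_rpow_neg {a b : ℝ} (ha : 0 < a) (hb : 0 < b) :
    ∫ t in Ioi (0:ℝ), t ^ (a - 1) * (1 + t) ^ (-(a + b))
      = Gamma a * Gamma b / Gamma (a + b) := by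
  have himage : (fun u : ℝ => u / (1 - u)) '' Ioo 0 1 = Ioi 0 := by
    ext y
    simp only [mem_image, mem_Ioo, mem_Ioi]
    constructor
    · rintro ⟨u, ⟨h0, h1⟩, rfl⟩
      exact div_pos h0 (by linarith)
    · intro hy
      refine ⟨y / (1 + y), ⟨by positivity, by rw [div_lt_one (by linarith)]; linarith⟩, ?_⟩
      field_simp
      ring
  have hderiv : ∀ u ∈ Ioo (0:ℝ) 1,
      HasDerivWithinAt (fun u : ℝ => u / (1 - u)) ((1 - u)⁻¹ ^ 2) (Ioo 0 1) u := by
    intro u hu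
    have h1 : (1:ℝ) - u ≠ 0 := by linarith [hu.2]
    refine ((hasDerivAt_id u).div ((hasDerivAt_id u).const_sub 1) h1).hasDerivWithinAt
      |>.congr_deriv ?_
    simp only [id]
    field_simp
    ring
  have hinj : InjOn (fun u : ℝ => u / (1 - u)) (Ioo 0 1) := by
    intro u hu v hv h
    have h1 : (1:ℝ) - u ≠ 0 := by linarith [hu.2]
    have h2 : (1:ℝ) - v ≠ 0 := by linarith [hv.2]
    field_simp at h
    linarith
  have hintegrand : ∀ u ∈ Ioo (0:ℝ) 1,
      |(1 - u)⁻¹ ^ 2| • ((u / (1 - u)) ^ (a - 1) * (1 + u / (1 - u)) ^ (-(a + b)))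
        = u ^ (a - 1) * (1 - u) ^ (b - 1) := by
    rintro u ⟨h0, hu1⟩
    have h1 : 0 < 1 - u := by linarith
    have hsum : 1 + u / (1 - u) = (1 - u)⁻¹ := by field_simp; ring
    rw [smul_eq_mul, hsum, abs_of_nonneg (by positivity), div_rpow h0.le h1.le, inv_rpow h1.le,
      ← rpow_neg h1.le, neg_neg]
    field_simp
    rw [← rpow_natCast, ← rpow_add h1, ← rpow_add h1]
    ring_nf
  rw [← himage, integral_image_eq_integral_abs_deriv_smul measurableSet_Ioo hderiv hinj,
    setIntegral_congr_fun measurableSet_Ioo hintegrand, ← integral_Ioc_eq_integral_Ioo,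
    ← intervalIntegral.integral_of_le zero_le_one]
  exact integral_rpow_mul_one_sub_rpow ha hb

theorem integral_Ioi_pow_mul_one_add_sq_rpow_neg {k : ℕ} (hk : 0 < k) {s : ℝ}
    (hs : k / 2 < s) :
    ∫ y in Ioi (0:ℝ), y ^ (k - 1) * (1 + y ^ 2) ^ (-s)
      = Gamma (k / 2) * Gamma (s - k / 2) / (2 * Gamma s) := by
  have hk2 : (0:ℝ) < k / 2 := by positivity
  have hsubst := integral_comp_rpow_Ioi
    (fun t => (1 / 2) * (t ^ ((k:ℝ) / 2 - 1) * (1 + t) ^ (-s))) two_ne_zero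
  have hintegrand : ∀ y ∈ Ioi (0:ℝ),
      (|2| * y ^ ((2:ℝ) - 1))
          • ((1 / 2) * ((y ^ (2:ℝ)) ^ ((k:ℝ) / 2 - 1) * (1 + y ^ (2:ℝ)) ^ (-s)))
        = y ^ (k - 1) * (1 + y ^ 2) ^ (-s) := by
    intro y (hy : 0 < y)
    rw [smul_eq_mul, ← rpow_mul hy.le, rpow_two, ← rpow_natCast y (k - 1), Nat.cast_sub hk,
      abs_of_pos two_pos, Nat.cast_one, show (k:ℝ) - 1 = (2 - 1) + 2 * (k / 2 - 1) by ring,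
      rpow_add hy]
    ring
  rw [← setIntegral_congr_fun measurableSet_Ioi hintegrand, hsubst, integral_const_mul,
    show -s = -(k / 2 + (s - k / 2)) by ring,
    integral_Ioi_rpow_mul_one_add_rpow_neg hk2 (by linarith), add_sub_cancel]
  ring

section

variable {E : Type*} [NormedAddCommGroup E] [InnerProductSpace ℝ E] [FiniteDimensional ℝ E]
  [MeasurableSpace E] [BorelSpace E] [Nontrivial E]

theorem integral_one_add_norm_sq_rpow_neg {s : ℝ} (hs : finrank ℝ E / 2 < s) :
    ∫ x : E, (1 + ‖x‖ ^ 2) ^ (-s)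
      = π ^ ((finrank ℝ E : ℝ) / 2) * Gamma (s - finrank ℝ E / 2) / Gamma s := by
  rw [integral_fun_norm_addHaar volume (fun r => (1 + r ^ 2) ^ (-s)), measureReal_def,
    InnerProductSpace.volume_ball]
  have hk : 0 < finrank ℝ E := finrank_pos
  generalize finrank ℝ E = k at *
  have hk2 : (0:ℝ) < k / 2 := by positivity
  simp only [nsmul_eq_mul, smul_eq_mul, ENNReal.ofReal_one, one_pow, one_mul]
  rw [integral_Ioi_pow_mul_one_add_sq_rpow_neg hk hs, ENNReal.toReal_ofReal (by positivity),
    Gamma_add_one hk2.ne', ← rpow_natCast, sqrt_eq_rpow, ← rpow_mul pi_pos.le]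
  have := (Gamma_pos_of_pos hk2).ne'
  have := (Gamma_pos_of_pos (hk2.trans hs)).ne'
  have : (k:ℝ) ≠ 0 := by positivity
  rw [show 1 / 2 * (k:ℝ) = k / 2 by ring]
  field_simp

theorem integral_add_norm_sq_div_rpow_neg {s t b : ℝ} (hs : finrank ℝ E / 2 < s) (ht : 0 < t)
    (hb : 0 < b) :
    ∫ x : E, (t + ‖x‖ ^ 2 / b) ^ (-s)
      = t ^ ((finrank ℝ E : ℝ) / 2 - s) * (b * π) ^ ((finrank ℝ E : ℝ) / 2)
        * Gamma (s - finrank ℝ E / 2) / Gamma s := by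
  set R := (t * b) ^ (-(1:ℝ) / 2)
  have htb : 0 < t * b := mul_pos ht hb
  have hR : 0 < R := rpow_pos_of_pos htb _
  have hR2 : R ^ 2 = (t * b)⁻¹ := by
    rw [← rpow_natCast, ← rpow_mul htb.le, ← rpow_neg_one]
    norm_num
  have hfactor :
      ∀ x : E, (t + ‖x‖ ^ 2 / b) ^ (-s) = t ^ (-s) * (1 + ‖R • x‖ ^ 2) ^ (-s) := by
    intro x
    rw [← mul_rpow ht.le (by positivity), norm_smul, mul_pow, norm_of_nonneg hR.le, hR2]
    field_simp
  have hRk : (R ^ finrank ℝ E)⁻¹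
      = t ^ ((finrank ℝ E : ℝ) / 2) * b ^ ((finrank ℝ E : ℝ) / 2) := by
    rw [← rpow_natCast, ← rpow_mul htb.le, ← rpow_neg htb.le, mul_rpow ht.le hb.le]
    ring_nf
  simp_rw [hfactor]
  rw [integral_const_mul, Measure.integral_comp_smul_of_nonneg volume
    (fun x : E => (1 + ‖x‖ ^ 2) ^ (-s)) R (hR := hR.le), integral_one_add_norm_sq_rpow_neg hs,
    smul_eq_mul, hRk, rpow_sub ht, rpow_neg ht.le, mul_rpow hb.le pi_pos.le]
  field_simp

end

theorem integral_add_sum_sq_div_rpow_neg {ι : Type*} [Fintype ι] {s t b : ℝ}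
    (hs : Fintype.card ι / 2 < s) (ht : 0 < t) (hb : 0 < b) :
    ∫ x : ι → ℝ, (t + (∑ i, x i ^ 2) / b) ^ (-s)
      = t ^ ((Fintype.card ι : ℝ) / 2 - s) * (b * π) ^ ((Fintype.card ι : ℝ) / 2)
        * Gamma (s - Fintype.card ι / 2) / Gamma s := by
  rcases isEmpty_or_nonempty ι with hι | hι
  · have := (Gamma_pos_of_pos (by simpa using hs)).ne'
    simp [Measure.volume_pi_eq_dirac 0, this]
  · rw [← (PiLp.volume_preserving_ofLp ι).integral_comp
      (MeasurableEquiv.toLp 2 (ι → ℝ)).symm.measurableEmbedding]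
    simp only [← EuclideanSpace.real_norm_sq_eq]
    simpa only [finrank_euclideanSpace] using
      integral_add_norm_sq_div_rpow_neg (E := EuclideanSpace ℝ ι) (by simpa using hs) ht hb

theorem integral_integral_one_add_sum_sq_rpow_neg {m n : ℕ} {ν σ s : ℝ} (hν : 0 < ν)
    (hσ : 0 < σ) (hs : ((m : ℝ) + n) / 2 < s) (μ : (Fin m → ℝ) → Fin n → ℝ) :
    ∫ z, ∫ x : Fin n → ℝ,
        (1 + (1 / ν) * ((∑ i, z i ^ 2) + (∑ j, (x j - μ z j) ^ 2) / σ ^ 2)) ^ (-s)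
      = σ ^ n * (ν * π) ^ (((m : ℝ) + n) / 2) * Gamma (s - (m + n) / 2) / Gamma s := by
  have hνσ : 0 < ν * σ ^ 2 := by positivity
  have hsn : (n : ℝ) / 2 < s := by linarith [(by positivity : (0:ℝ) ≤ m / 2)]
  have hinner : ∀ z : Fin m → ℝ,
      ∫ x : Fin n → ℝ,
          (1 + (1 / ν) * ((∑ i, z i ^ 2) + (∑ j, (x j - μ z j) ^ 2) / σ ^ 2)) ^ (-s)
        = σ ^ n * (ν * π) ^ ((n : ℝ) / 2) * Gamma (s - n / 2) / Gamma s
          * (1 + (∑ i, z i ^ 2) / ν) ^ (-(s - n / 2)) := by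
    intro z
    have hsplit : ∀ x : Fin n → ℝ,
        1 + (1 / ν) * ((∑ i, z i ^ 2) + (∑ j, (x j - μ z j) ^ 2) / σ ^ 2)
          = (1 + (∑ i, z i ^ 2) / ν) + (∑ j, (x - μ z) j ^ 2) / (ν * σ ^ 2) := by
      intro x
      simp only [Pi.sub_apply]
      field_simp
      ring
    simp_rw [hsplit]
    rw [integral_sub_right_eq_self
      (fun y : Fin n → ℝ =>
        ((1 + (∑ i, z i ^ 2) / ν) + (∑ j, y j ^ 2) / (ν * σ ^ 2)) ^ (-s)),
      integral_add_sum_sq_div_rpow_neg (by simpa using hsn) (by positivity) hνσ,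
      Fintype.card_fin, show ν * σ ^ 2 * π = σ ^ 2 * (ν * π) by ring,
      mul_rpow (by positivity) (by positivity), ← rpow_natCast σ 2, ← rpow_mul hσ.le,
      ← rpow_natCast σ n, neg_sub]
    ring_nf
  simp_rw [hinner]
  have hsmn : ((Fintype.card (Fin m) : ℕ) : ℝ) / 2 < s - n / 2 := by
    rw [Fintype.card_fin]; linarith
  rw [integral_const_mul, integral_add_sum_sq_div_rpow_neg hsmn one_pos hν,
    Fintype.card_fin, one_rpow, add_div, rpow_add (by positivity), sub_sub, add_comm (n / 2 : ℝ)]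
  have hG := (Gamma_pos_of_pos (by linarith : (0:ℝ) < s - n / 2)).ne'
  generalize Gamma (s - n / 2) = G at hG ⊢
  field_simp

theorem tC_pos {ν : ℝ} (hν : 0 < ν) (d : ℕ) : 0 < tC ν d := by
  unfold tC
  have := Gamma_pos_of_pos (by positivity : 0 < (ν + d) / 2)
  have := Gamma_pos_of_pos (by positivity : 0 < ν / 2)
  positivity

theorem tC_mul_rpow_mul_Gamma {ν : ℝ} (hν : 2 < ν) (d : ℕ) :
    tC ν d * (ν * π) ^ ((d : ℝ) / 2) * Gamma ((ν - 2) / 2)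
      = (1 + d / (ν - 2)) * Gamma ((ν + d - 2) / 2) := by
  have hν2 : 0 < (ν - 2) / 2 := by linarith
  have hνd : 0 < (ν + d - 2) / 2 := by linarith [(by positivity : (0:ℝ) ≤ d / 2)]
  have hGν : Gamma (ν / 2) = (ν - 2) / 2 * Gamma ((ν - 2) / 2) := by
    rw [← Gamma_add_one hν2.ne']; ring_nf
  have hGνd : Gamma ((ν + d) / 2) = (ν + d - 2) / 2 * Gamma ((ν + d - 2) / 2) := by
    rw [← Gamma_add_one hνd.ne']; ring_nf
  have := (Gamma_pos_of_pos hν2).ne'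
  have := (rpow_pos_of_pos (by positivity : 0 < ν * π) ((d : ℝ) / 2)).ne'
  have : ν - 2 ≠ 0 := by linarith
  unfold tC
  rw [hGν, hGνd]
  field_simp
  ring

theorem pjoint_rpow_one_add {m n : ℕ} {ν σ γ : ℝ} (hν : 0 < ν) (hσ : 0 < σ)
    (hγ : γ = -2 / (ν + m + n)) (μ : (Fin m → ℝ) → Fin n → ℝ)
    (x : Fin n → ℝ) (z : Fin m → ℝ) :
    pjoint m n ν σ μ x z ^ (1 + γ)
      = σ ^ (-(γ * n)) * tC ν (m + n) ^ γ * tC ν (m + n) * (σ ^ n)⁻¹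
        * (1 + (1 / ν) * ((∑ i, z i ^ 2) + (∑ j, (x j - μ z j) ^ 2) / σ ^ 2))
          ^ (-((ν + m + n - 2) / 2)) := by
  set u := 1 + (1 / ν) * ((∑ i, z i ^ 2) + (∑ j, (x j - μ z j) ^ 2) / σ ^ 2)
  have hu : 0 < u := by positivity
  have hC := tC_pos hν (m + n)
  have hp : 0 < pjoint m n ν σ μ x z := by unfold pjoint; positivity
  have hσn : ((σ ^ n)⁻¹) ^ γ = σ ^ (-(γ * n)) := by
    rw [← rpow_natCast, ← rpow_neg hσ.le, ← rpow_mul hσ.le]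
    ring_nf
  have hu1 : (u ^ (-(ν + m + n) / 2)) ^ γ = u := by
    rw [← rpow_mul hu.le, hγ, show -(ν + m + n) / 2 * (-2 / (ν + m + n)) = 1 by field_simp,
      rpow_one]
  have hus : u ^ (-(ν + m + n) / 2) * u = u ^ (-((ν + m + n - 2) / 2)) := by
    rw [← rpow_add_one hu.ne']
    ring_nf
  rw [add_comm, rpow_add_one hp.ne', pjoint, mul_rpow (by positivity) (by positivity),
    mul_rpow hC.le (by positivity), hσn, hu1, ← hus]
  ring

theorem stmt_16_general (m n : ℕ) (ν σ γ : ℝ) (hν : 2 < ν) (hσ : 0 < σ)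
    (hγ : γ = -2 / (ν + m + n))
    (μ : (Fin m → ℝ) → Fin n → ℝ) :
    (∫ z, ∫ x, pjoint m n ν σ μ x z ^ (1 + γ))
      = σ ^ (-(γ * n)) * tC ν (m + n) ^ γ * (1 + (m + n) / (ν - 2)) := by
  have hν0 : 0 < ν := by linarith
  have hs : ((m : ℝ) + n) / 2 < (ν + m + n - 2) / 2 := by linarith
  simp_rw [pjoint_rpow_one_add hν0 hσ hγ μ, integral_const_mul,
    integral_integral_one_add_sum_sq_rpow_neg hν0 hσ hs μ]
  have hkey := tC_mul_rpow_mul_Gamma hν (m + n)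
  have hΓ := (Gamma_pos_of_pos (hs.trans_le' (by positivity))).ne'
  have hσn : σ ^ n ≠ 0 := by positivity
  push_cast at hkey ⊢
  rw [← add_assoc] at hkey
  rw [show (ν + m + n - 2) / 2 - (m + n) / 2 = (ν - 2) / 2 by ring]
  calc _ = σ ^ (-(γ * n)) * tC ν (m + n) ^ γ
        * (tC ν (m + n) * (ν * π) ^ (((m : ℝ) + n) / 2) * Gamma ((ν - 2) / 2))
          / Gamma ((ν + m + n - 2) / 2) := by field_simp
    _ = _ := by rw [hkey]; field_simp

/-- `∬ p_{θ,ν}(x,z)^{1+γ} dx dz = σ^{−γn} C_{ν,m+n}^γ (1 + (m+n)/(ν−2))`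
for ν > 2 and γ = −2/(ν+m+n). -/
theorem stmt_16 (m n : ℕ) (ν σ γ : ℝ) (hν : 2 < ν) (hσ : 0 < σ)
    (hγ : γ = -2 / (ν + m + n))
    (μ : (Fin m → ℝ) → Fin n → ℝ) (hμ : Measurable μ) :
    (∫ z, ∫ x, pjoint m n ν σ μ x z ^ (1 + γ))
      = σ ^ (-(γ * n)) * tC ν (m + n) ^ γ * (1 + (m + n) / (ν - 2)) :=
  stmt_16_general m n ν σ γ hν hσ hγ μ
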